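/- arXiv:1611.05979 — 6 statements merged into one kernel-verified Lean document; each statement's English description precedes it below -/
import Mathlib

section
/- For any full-rank lattice L in R^n and any two primitive sublattices L1, L2 of L, one has rank(L1) + rank(L2) = rank(L1 ∩ L2) + rank(L1 + L2), and det(L1 ∩ L2) * det(L1 + L2) <= det(L1) * det(L2), where by convention det({0}) = 1. -/
open scoped Real Pointwise
open MeasureTheory Set

noncomputable section

variable {E : Type*} [NormedAddCommGroup E] [InnerProductSpace ℝ E]

/-- `A` is (the point set of) a lattice of some rank `d` with determinant `v`,
computed as `sqrt (det (Bᵀ B))` for a `ℤ`-basis `b` that is `ℝ`-linearly independent. -/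
def latHasDet (A : Set E) (v : ℝ) : Prop :=
  ∃ (d : ℕ) (b : Fin d → E), LinearIndependent ℝ b ∧
    A = (Submodule.span ℤ (Set.range b) : Set E) ∧
    v = Real.sqrt (Matrix.det (Matrix.of fun i j : Fin d => (inner ℝ (b i) (b j) : ℝ)))

/-- `L` is a lattice of rank `d` : it is generated over `ℤ` by `d` 
`ℝ`-linearly independent vectors. -/
def IsLatticeOfRank (L : Submodule ℤ E) (d : ℕ) : Prop :=
  ∃ b : Fin d → E, LinearIndependent ℝ b ∧ L = Submodule.span ℤ (Set.range b)

/-- Gaussian mass of a set `A` with parameter `s`. -/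
def rhoS (s : ℝ) (A : Set E) : ℝ := ∑' x : A, Real.exp (-π * ‖(x : E)‖ ^ 2 / s ^ 2)

/-- A lattice (given by its point set) is stable if it has determinant one and every
sublattice has determinant at least one. -/
def IsStable (A : Set E) : Prop :=
  latHasDet A 1 ∧
    ∀ M : Submodule ℤ E, (M : Set E) ⊆ A → ∀ v, latHasDet (M : Set E) v → 1 ≤ v

/-- The Voronoi cell of a lattice. -/
def voronoi (L : Submodule ℤ E) : Set E := {x | ∀ y ∈ L, ‖x‖ ≤ ‖y - x‖}

/-- The covering radius of a lattice: the furthest distance from a point of the span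
of the lattice to the lattice. -/
def covRad (L : Submodule ℤ E) : ℝ :=
  ⨆ t : Submodule.span ℝ (L : Set E), ⨅ y : L, ‖(t : E) - (y : E)‖

/-- The dual lattice, as a set. -/
def dualSet (L : Submodule ℤ E) : Set E :=
  {w | ∀ y ∈ L, ∃ k : ℤ, (inner ℝ w y : ℝ) = (k : ℝ)}

/-- The Gaussian measure of `S/s`. -/
def gauss {n : ℕ} (s : ℝ) (S : Set (EuclideanSpace ℝ (Fin n))) : ℝ :=
  ∫ x in s⁻¹ • S, Real.exp (-π * ‖x‖ ^ 2)

/-- A fundamental body for a lattice with point set `L`: a convex body `K` such that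
`K + L` tiles space, i.e. `vol K = det L` and the interior of `K` is disjoint from every
nontrivial lattice translate of `K`. -/
def IsFundBody {n : ℕ} (L : Set (EuclideanSpace ℝ (Fin n)))
    (K : Set (EuclideanSpace ℝ (Fin n))) : Prop :=
  Convex ℝ K ∧ IsCompact K ∧ (interior K).Nonempty ∧
    (∀ y ∈ L, y ≠ 0 → interior K ∩ ((fun x => x + y) '' K) = ∅) ∧
    ∀ v, latHasDet L v → volume K = ENNReal.ofReal v

/-- Concatenation of Euclidean vectors. -/
def appendE {n m : ℕ} (x : EuclideanSpace ℝ (Fin n)) (y : EuclideanSpace ℝ (Fin m)) :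
    EuclideanSpace ℝ (Fin (n + m)) :=
  WithLp.toLp 2 (fun i => Fin.addCases (motive := fun _ => ℝ) (fun j => x j) (fun j => y j) i)

/-!
Choose a basis of `L₁` extending one of `L₁ ∩ L₂`, and a basis of `L₁ + L₂` extending one of
`L₂`; both exist because `L₂` is primitive. The Gram determinant of a basis `(m, u)` factors as
`det (gram m) * det (gram (π u))`, where `π` is the orthogonal projection onto `(span m)ᗮ`. Hence
`det L₁ = det (L₁ ∩ L₂) * det (π₁ u₁)` and `det (L₁ + L₂) = det L₂ * det (π₂ u₂)`, with `π₁`, `π₂`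
the projections killing `L₁ ∩ L₂` and `L₂`. Now `π₂ u₁` and `π₂ u₂` span the same lattice
`π₂ (L₁ + L₂) = π₂ L₁`, so they have the same Gram determinant, and since `π₂ = π₂ ∘ π₁`, projecting
further only decreases it: `det (π₂ u₂) = det (π₂ u₁) ≤ det (π₁ u₁)`. The rank identity is
rank-nullity for the `ℤ`-modules `L₁ ∩ L₂ → L₁ × L₂ → L₁ + L₂`.
-/

open Matrix Submodule

namespace Matrix.PosSemidef

variable {n : Type*} [Fintype n] [DecidableEq n]

theorem one_le_det_one_add {S : Matrix n n ℝ} (hS : S.PosSemidef) : 1 ≤ (1 + S).det := by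
  have : IsSelfAdjoint S := hS.1
  have h : cfc (fun x : ℝ => 1 + x) S = 1 + S := by
    rw [cfc_const_add _ _ S, cfc_id' ℝ S, Algebra.algebraMap_eq_smul_one, one_smul]
  rw [← h, hS.1.cfc_eq]
  simp only [IsHermitian.cfc, RCLike.ofReal_real_eq_id, CompTriple.comp_eq, det_map, det_diagonal,
    Function.comp_apply]
  exact Finset.one_le_prod fun i _ => le_add_of_nonneg_right (hS.eigenvalues_nonneg i)

open scoped MatrixOrder in
theorem det_le_det_add {A B : Matrix n n ℝ} (hA : A.PosSemidef) (hB : B.PosSemidef) :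
    A.det ≤ (A + B).det := by
  rcases hA.det_nonneg.eq_or_lt with h0 | hpos
  · rw [← h0]
    exact (hA.add hB).det_nonneg
  obtain ⟨C, rfl⟩ : ∃ C, A = star C * C := CStarAlgebra.nonneg_iff_eq_star_mul_self.mp hA.nonneg
  have hC : IsUnit C.det := by
    rw [isUnit_iff_ne_zero]
    intro h
    simp [h] at hpos
  have hsplit : star C * C + B = star C * (1 + star C⁻¹ * B * C⁻¹) * C := by
    rw [mul_add, add_mul, mul_one, ← Matrix.mul_assoc, ← Matrix.mul_assoc, ← star_mul,
      nonsing_inv_mul _ hC, star_one, one_mul, Matrix.mul_assoc, nonsing_inv_mul _ hC, mul_one]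
  calc (star C * C).det ≤ (star C * C).det * (1 + star C⁻¹ * B * C⁻¹).det :=
        le_mul_of_one_le_right hpos.le (hB.conjTranspose_mul_mul_same C⁻¹).one_le_det_one_add
    _ = (star C * C + B).det := by rw [hsplit]; simp only [det_mul]; ring

end Matrix.PosSemidef

section Gram

variable {ι κ : Type*}

theorem Submodule.inner_starProjection_starProjection (K : Submodule ℝ E)
    [K.HasOrthogonalProjection] (x y : E) :
    inner ℝ (K.starProjection x) (K.starProjection y) = inner ℝ x (K.starProjection y) := by
  rw [inner_starProjection_left_eq_right,
    starProjection_eq_self_iff.mpr (K.starProjection_apply_mem y)]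

theorem Matrix.gram_eq_gram_starProjection_add (K : Submodule ℝ E) [K.HasOrthogonalProjection]
    (w : ι → E) :
    gram ℝ w = gram ℝ (K.starProjection ∘ w) + gram ℝ (Kᗮ.starProjection ∘ w) := by
  ext i j
  simp only [gram_apply, add_apply, Function.comp_apply, inner_starProjection_starProjection,
    ← inner_add_right, starProjection_add_starProjection_orthogonal]

theorem Matrix.det_gram_starProjection_le [Fintype ι] [DecidableEq ι] (K : Submodule ℝ E)
    [K.HasOrthogonalProjection] (w : ι → E) :
    (gram ℝ (K.starProjection ∘ w)).det ≤ (gram ℝ w).det := by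
  rw [gram_eq_gram_starProjection_add K w]
  exact (posSemidef_gram ℝ _).det_le_det_add (posSemidef_gram ℝ _)

theorem Matrix.det_gram_starProjection_le_of_le [Fintype ι] [DecidableEq ι]
    {U V : Submodule ℝ E} [U.HasOrthogonalProjection] [V.HasOrthogonalProjection] (hUV : U ≤ V)
    (w : ι → E) : (gram ℝ (U.starProjection ∘ w)).det ≤ (gram ℝ (V.starProjection ∘ w)).det := by
  have : U.starProjection ∘ (V.starProjection ∘ w) = U.starProjection ∘ w := by
    ext1 j
    exact DFunLike.congr_fun (starProjection_comp_starProjection_of_le hUV) (w j)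
  rw [← this]
  exact det_gram_starProjection_le U _

theorem Matrix.gram_sum_smul [Fintype κ] (T : Matrix κ ι ℝ) (g : κ → E) :
    gram ℝ (fun i => ∑ k, T k i • g k) = Tᵀ * gram ℝ g * T := by
  ext i j
  simp only [gram_apply, sum_inner, inner_sum, real_inner_smul_left, real_inner_smul_right,
    mul_apply, transpose_apply, Finset.sum_mul]
  exact Finset.sum_congr rfl fun _ _ => Finset.sum_congr rfl fun _ _ => by ring

theorem Matrix.det_gram_sum_elim [Fintype ι] [DecidableEq ι] [Fintype κ] [DecidableEq κ]
    (m : ι → E) (u : κ → E) (K : Submodule ℝ E) [K.HasOrthogonalProjection]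
    (hK : span ℝ (range m) = K) :
    (gram ℝ (Sum.elim m u)).det = (gram ℝ m).det * (gram ℝ (Kᗮ.starProjection ∘ u)).det := by
  have hmK (i : ι) : m i ∈ K := hK.le (subset_span (mem_range_self i))
  have hc (j : κ) : ∃ c : ι → ℝ, ∑ i, c i • m i = K.starProjection (u j) :=
    (mem_span_range_iff_exists_fun ℝ).1 (by rw [hK]; exact K.starProjection_apply_mem (u j))
  choose c hc using hc
  -- `T` is unitriangular and expresses `(m, u)` through `(m, Kᗮ.starProjection ∘ u)`, whose Gram
  -- matrix is block diagonal.
  set T : Matrix (ι ⊕ κ) (ι ⊕ κ) ℝ := fromBlocks 1 (of fun i j => c j i) 0 1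
  have hdecomp : Sum.elim m u =
      fun a => ∑ b, T b a • Sum.elim m (Kᗮ.starProjection ∘ u) b := by
    ext (i | j)
    · simp [T, Fintype.sum_sum_type, one_apply]
    · simp [T, Fintype.sum_sum_type, one_apply, hc]
  have hblock : gram ℝ (Sum.elim m (Kᗮ.starProjection ∘ u)) =
      fromBlocks (gram ℝ m) 0 0 (gram ℝ (Kᗮ.starProjection ∘ u)) := by
    ext (i | i) (j | j)
    · rfl
    · exact inner_right_of_mem_orthogonal (hmK i) (starProjection_apply_mem _ _)
    · exact inner_left_of_mem_orthogonal (hmK j) (starProjection_apply_mem _ _)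
    · rfl
  rw [hdecomp, gram_sum_smul, det_mul, det_mul, det_transpose, hblock]
  simp [T, det_fromBlocks_zero₂₁]

end Gram

section IntegralSpan

variable {ι ι' : Type*} [Fintype ι] [Fintype ι']

theorem LinearIndependent.of_span_int_eq {f : ι → E} {g : ι' → E} (hg : LinearIndependent ℝ g)
    (hcard : Fintype.card ι = Fintype.card ι')
    (h : span ℤ (range f) = span ℤ (range g)) : LinearIndependent ℝ f := by
  have hspan : span ℝ (range f) = span ℝ (range g) := by
    rw [← span_span_of_tower ℤ, h, span_span_of_tower]
  rw [linearIndependent_iff_card_eq_finrank_span] at hg ⊢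
  rwa [Set.finrank, hspan, hcard]

theorem det_gram_eq_of_span_int_eq [DecidableEq ι] {f g : ι → E} (hg : LinearIndependent ℝ g)
    (h : span ℤ (range f) = span ℤ (range g)) : (gram ℝ f).det = (gram ℝ g).det := by
  have hf := hg.of_span_int_eq rfl h
  let bf := Module.Basis.span (hf.restrict_scalars' ℤ)
  let bg := (Module.Basis.span (hg.restrict_scalars' ℤ)).map (LinearEquiv.ofEq _ _ h.symm)
  set T := bg.toMatrix bf
  have hT : f = fun i => ∑ j, T.map (Int.cast : ℤ → ℝ) j i • g j := by
    ext i
    calc f i = (bf i : E) := by simp [bf, Module.Basis.span_apply]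
      _ = ((∑ j, T j i • bg j : span ℤ (range f)) : E) := by rw [bg.sum_toMatrix_smul_self]
      _ = ∑ j, T.map (Int.cast : ℤ → ℝ) j i • g j := by
        simp [bg, Int.cast_smul_eq_zsmul, Module.Basis.span_apply]
  have hTdet : (T.map (Int.cast : ℤ → ℝ)).det = T.det := by
    simpa using ((Int.castRingHom ℝ).map_det T).symm
  have hunit : (T.det : ℝ) ^ 2 = 1 := by
    have := congrArg det (bg.toMatrix_mul_toMatrix_flip bf)
    rw [det_mul, det_one] at this
    exact_mod_cast Int.isUnit_sq (IsUnit.of_mul_eq_one _ this)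
  rw [hT, gram_sum_smul, det_mul, det_mul, det_transpose, hTdet]
  linear_combination (gram ℝ g).det * hunit

end IntegralSpan

theorem Submodule.map_sup_span_range_of_le_ker {R V W ι : Type*} [Ring R] [AddCommGroup V]
    [AddCommGroup W] [Module R V] [Module R W] (f : V →ₗ[R] W) {P : Submodule R V}
    (hP : P ≤ LinearMap.ker f) (u : ι → V) :
    (P ⊔ span R (range u)).map f = span R (range (f ∘ u)) := by
  rw [map_sup, map_span, range_comp, (LinearMap.le_ker_iff_map).1 hP, bot_sup_eq]

section Lattice

theorem Module.Basis.span_coe_eq_map_subtype {ι R V : Type*} [Ring R] [AddCommGroup V]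
    [Module R V] {P : Submodule R V} {Q : Submodule R P} (b : Module.Basis ι R Q) :
    span R (range fun i => ((b i : P) : V)) = Q.map P.subtype := by
  rw [show (fun i => ((b i : P) : V)) = (P.subtype ∘ₗ Q.subtype) ∘ b from rfl, range_comp,
    ← map_span, b.span_eq, map_comp, map_subtype_top]

def IsPrimitiveIn (M N : Submodule ℤ E) : Prop :=
  M ≤ N ∧ ∀ x ∈ N, x ∈ span ℝ (M : Set E) → x ∈ M

variable {ι : Type*} [Fintype ι] {M N L : Submodule ℤ E}

theorem IsPrimitiveIn.inf_left (h : IsPrimitiveIn M N) (hL : L ≤ N) : IsPrimitiveIn (L ⊓ M) L :=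
  ⟨inf_le_left, fun x hx hs =>
    ⟨hx, h.2 x (hL hx) (span_mono (SetLike.coe_subset_coe.mpr inf_le_right) hs)⟩⟩

theorem IsPrimitiveIn.sup_left (h : IsPrimitiveIn M N) (hL : L ≤ N) : IsPrimitiveIn M (L ⊔ M) :=
  ⟨le_sup_right, fun x hx hs => h.2 x (sup_le hL h.1 hx) hs⟩

theorem IsPrimitiveIn.mem_of_zsmul_mem (h : IsPrimitiveIn M N) {x : E} (hx : x ∈ N) {a : ℤ}
    (ha : a ≠ 0) (hax : a • x ∈ M) : x ∈ M := by
  refine h.2 x hx ?_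
  have : (a : ℝ) • x ∈ span ℝ (M : Set E) := by
    rw [Int.cast_smul_eq_zsmul]
    exact subset_span hax
  simpa [ha] using smul_mem _ (a : ℝ)⁻¹ this

theorem IsLatticeOfRank.rank_eq {d : ℕ} (h : IsLatticeOfRank N d) : Module.rank ℤ N = d := by
  obtain ⟨b, hb, rfl⟩ := h
  rw [rank_span (hb.restrict_scalars' ℤ)]
  simpa using Cardinal.mk_range_eq_of_injective hb.injective

theorem IsLatticeOfRank.eq_card {d : ℕ} (h : IsLatticeOfRank N d) {g : ι → E}
    (hg : LinearIndependent ℝ g) (hN : N = span ℤ (range g)) : d = Fintype.card ι := by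
  obtain ⟨b, hb, rfl⟩ := h
  have := finrank_span_eq_card (hb.restrict_scalars' ℤ)
  rw [hN, finrank_span_eq_card (hg.restrict_scalars' ℤ)] at this
  simpa using this.symm

theorem IsLatticeOfRank.add_eq_inf_add_sup {L₁ L₂ : Submodule ℤ E} {d₁ d₂ dᵢ dₛ : ℕ}
    (h₁ : IsLatticeOfRank L₁ d₁) (h₂ : IsLatticeOfRank L₂ d₂)
    (hᵢ : IsLatticeOfRank (L₁ ⊓ L₂) dᵢ) (hₛ : IsLatticeOfRank (L₁ ⊔ L₂) dₛ) :
    d₁ + d₂ = dᵢ + dₛ := by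
  have := rank_sup_add_rank_inf_eq L₁ L₂
  rw [h₁.rank_eq, h₂.rank_eq, hᵢ.rank_eq, hₛ.rank_eq] at this
  norm_cast at this
  omega

theorem latHasDet.nonneg {A : Set E} {v : ℝ} (h : latHasDet A v) : 0 ≤ v := by
  obtain ⟨_, _, _, _, rfl⟩ := h
  exact Real.sqrt_nonneg _

theorem latHasDet.eq_sqrt_det_gram [DecidableEq ι] {v : ℝ} (h : latHasDet (N : Set E) v)
    {g : ι → E} (hg : LinearIndependent ℝ g) (hN : N = span ℤ (range g)) :
    v = √(gram ℝ g).det := by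
  obtain ⟨d, b, hb, hNb, rfl⟩ := h
  replace hNb : N = span ℤ (range b) := SetLike.coe_injective hNb
  have hcard : Fintype.card (Fin d) = Fintype.card ι := by
    rw [Fintype.card_fin]
    exact IsLatticeOfRank.eq_card ⟨b, hb, hNb⟩ hg hN
  let e := Fintype.equivOfCardEq hcard
  have hspan : span ℤ (range b) = span ℤ (range (g ∘ e)) := by
    rw [e.surjective.range_comp, ← hNb, hN]
  congr 1
  calc (of fun i j => inner ℝ (b i) (b j)).det = (gram ℝ (g ∘ e)).det :=
        det_gram_eq_of_span_int_eq (hg.comp e e.injective) hspan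
    _ = (gram ℝ g).det := det_submatrix_equiv_self e (gram ℝ g)

theorem IsLatticeOfRank.exists_basis_of_isPrimitiveIn {d : ℕ} (hN : IsLatticeOfRank N d)
    (hM : IsPrimitiveIn M N) :
    ∃ (k l : ℕ) (m : Fin k → E) (u : Fin l → E), LinearIndependent ℝ (Sum.elim m u) ∧
      N = span ℤ (range (Sum.elim m u)) ∧ M = span ℤ (range m) := by
  obtain ⟨b, hb, hNb⟩ := hN
  let bN : Module.Basis (Fin d) ℤ N :=
    (Module.Basis.span (hb.restrict_scalars' ℤ)).map (LinearEquiv.ofEq _ _ hNb.symm)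
  obtain ⟨k, o, hko, bO, bM, a, ha⟩ :=
    exists_smith_normal_form_of_le bN (M.comap N.subtype) ⊤ le_top
  obtain ⟨l, rfl⟩ := Nat.exists_eq_add_of_le hko
  set c : Fin (k + l) → E := fun i => ((bO i : N) : E)
  have hcN : span ℤ (range c) = N := by rw [bO.span_coe_eq_map_subtype, map_subtype_top]
  have hc : LinearIndependent ℝ c :=
    hb.of_span_int_eq (Fintype.card_congr ((bO.map topEquiv).indexEquiv bN)) (hcN.trans hNb)
  have hcomp : Sum.elim (c ∘ Fin.castAdd l) (c ∘ Fin.natAdd k) = c ∘ finSumFinEquiv := by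
    ext (i | i) <;> rfl
  refine ⟨k, l, c ∘ Fin.castAdd l, c ∘ Fin.natAdd k, ?_, ?_, ?_⟩
  · rw [hcomp]
    exact hc.comp _ finSumFinEquiv.injective
  · rw [hcomp, finSumFinEquiv.surjective.range_comp, hcN]
  have hbM (i : Fin k) : ((bM i : N) : E) = a i • c (Fin.castAdd l i) := by
    rw [ha]
    rfl
  have hMspan : span ℤ (range fun i => ((bM i : N) : E)) = M := by
    rw [bM.span_coe_eq_map_subtype, map_comap_subtype, inf_eq_right.2 hM.1]
  apply le_antisymm
  · rw [← hMspan, span_le]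
    rintro _ ⟨i, rfl⟩
    dsimp only
    rw [hbM]
    exact smul_mem _ _ (subset_span (mem_range_self i))
  · rw [span_le]
    rintro _ ⟨i, rfl⟩
    refine hM.mem_of_zsmul_mem (bO _ : N).2 (a := a i) ?_ (hbM i ▸ (bM i).2)
    intro hai
    refine bM.ne_zero i (Subtype.ext (Subtype.ext ?_))
    simp [hbM, hai]

theorem IsLatticeOfRank.exists_det_eq_mul [FiniteDimensional ℝ E] {dM dN : ℕ} {vM vN : ℝ}
    (hN : IsLatticeOfRank N dN) (hM : IsLatticeOfRank M dM) (hMN : IsPrimitiveIn M N)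
    (hvN : latHasDet (N : Set E) vN) (hvM : latHasDet (M : Set E) vM) :
    ∃ (l : ℕ) (u : Fin l → E), dN = dM + l ∧ N = M ⊔ span ℤ (range u) ∧
      LinearIndependent ℝ ((span ℝ (M : Set E))ᗮ.starProjection ∘ u) ∧
      vN = vM * √(gram ℝ ((span ℝ (M : Set E))ᗮ.starProjection ∘ u)).det := by
  obtain ⟨k, l, m, u, hli, hNmu, hMm⟩ := hN.exists_basis_of_isPrimitiveIn hMN
  have hm : LinearIndependent ℝ m := hli.comp Sum.inl Sum.inl_injective
  have hK : span ℝ (range m) = span ℝ (M : Set E) := by rw [hMm, span_span_of_tower]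
  have hdet := det_gram_sum_elim m u _ hK
  refine ⟨l, u, ?_, ?_, ?_, ?_⟩
  · rw [hN.eq_card hli hNmu, hM.eq_card hm hMm]
    simp
  · rw [hNmu, Sum.elim_range, span_union, hMm]
  · have := det_gram_ne_zero_iff_linearIndependent.2 hli
    rw [hdet] at this
    exact det_gram_ne_zero_iff_linearIndependent.1 (right_ne_zero_of_mul this)
  · rw [hvN.eq_sqrt_det_gram hli hNmu, hvM.eq_sqrt_det_gram hm hMm, hdet,
      Real.sqrt_mul (posSemidef_gram ℝ m).det_nonneg]

theorem span_range_starProjection_eq_of_sup_eq {κ κ' : Type*} {L₁ L₂ : Submodule ℤ E}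
    [(span ℝ (L₂ : Set E)).HasOrthogonalProjection] {u : κ → E} {u' : κ' → E}
    (h₁ : L₁ = L₁ ⊓ L₂ ⊔ span ℤ (range u)) (hₛ : L₁ ⊔ L₂ = L₂ ⊔ span ℤ (range u')) :
    span ℤ (range ((span ℝ (L₂ : Set E))ᗮ.starProjection ∘ u)) =
      span ℤ (range ((span ℝ (L₂ : Set E))ᗮ.starProjection ∘ u')) := by
  let proj := ((span ℝ (L₂ : Set E))ᗮ.starProjection : E →ₗ[ℝ] E).restrictScalars ℤ
  have hker : L₂ ≤ LinearMap.ker proj := by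
    intro x hx
    rw [LinearMap.mem_ker, LinearMap.restrictScalars_apply, ContinuousLinearMap.coe_coe]
    exact starProjection_orthogonal_apply_eq_zero (subset_span hx)
  have e₁ := map_sup_span_range_of_le_ker proj ((inf_le_right (a := L₁)).trans hker) u
  have eₛ := map_sup_span_range_of_le_ker proj hker u'
  rw [← h₁] at e₁
  rw [← hₛ, Submodule.map_sup, (LinearMap.le_ker_iff_map).1 hker, sup_bot_eq] at eₛ
  exact e₁.symm.trans eₛ

end Lattice

theorem rank_det_uncrossing_general {n : ℕ} (L L1 L2 : Submodule ℤ (EuclideanSpace ℝ (Fin n)))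
    (h1 : L1 ≤ L) (h2 : L2 ≤ L)
    (hprim2 : (L2 : Set (EuclideanSpace ℝ (Fin n))) =
      (L : Set (EuclideanSpace ℝ (Fin n))) ∩
        (Submodule.span ℝ (L2 : Set (EuclideanSpace ℝ (Fin n))) :
          Set (EuclideanSpace ℝ (Fin n))))
    (d1 d2 di ds : ℕ)
    (hd1 : IsLatticeOfRank L1 d1) (hd2 : IsLatticeOfRank L2 d2)
    (hdi : IsLatticeOfRank (L1 ⊓ L2) di) (hds : IsLatticeOfRank (L1 ⊔ L2) ds)
    (v1 v2 vi vs : ℝ)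
    (hv1 : latHasDet (L1 : Set (EuclideanSpace ℝ (Fin n))) v1)
    (hv2 : latHasDet (L2 : Set (EuclideanSpace ℝ (Fin n))) v2)
    (hvi : latHasDet ((L1 ⊓ L2 : Submodule ℤ (EuclideanSpace ℝ (Fin n))) :
      Set (EuclideanSpace ℝ (Fin n))) vi)
    (hvs : latHasDet ((L1 ⊔ L2 : Submodule ℤ (EuclideanSpace ℝ (Fin n))) :
      Set (EuclideanSpace ℝ (Fin n))) vs) :
    d1 + d2 = di + ds ∧ vi * vs ≤ v1 * v2 := by
  have hprim : IsPrimitiveIn L2 L :=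
    ⟨h2, fun x hx hs => by rw [← SetLike.mem_coe, hprim2]; exact ⟨hx, hs⟩⟩
  obtain ⟨l, u, hdu, hL1, -, hv1u⟩ := hd1.exists_det_eq_mul hdi (hprim.inf_left h1) hv1 hvi
  obtain ⟨l', u', hdu', hLs, hli', hvsu'⟩ := hds.exists_det_eq_mul hd2 (hprim.sup_left h1) hvs hv2
  have hrank := hd1.add_eq_inf_add_sup hd2 hdi hds
  refine ⟨hrank, ?_⟩
  obtain rfl : l = l' := by omega
  let P := (span ℝ (L2 : Set (EuclideanSpace ℝ (Fin n))))ᗮ.starProjection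
  let Q := (span ℝ ((L1 ⊓ L2 : Submodule ℤ _) : Set (EuclideanSpace ℝ (Fin n))))ᗮ.starProjection
  have hspan : span ℤ (range (P ∘ u)) = span ℤ (range (P ∘ u')) :=
    span_range_starProjection_eq_of_sup_eq hL1 hLs
  have hPQ : (gram ℝ (P ∘ u)).det ≤ (gram ℝ (Q ∘ u)).det :=
    det_gram_starProjection_le_of_le
      (orthogonal_le (span_mono (SetLike.coe_subset_coe.mpr inf_le_right))) u
  calc vi * vs = vi * v2 * √(gram ℝ (P ∘ u')).det := by rw [hvsu']; ring
    _ = vi * v2 * √(gram ℝ (P ∘ u)).det := by rw [det_gram_eq_of_span_int_eq hli' hspan]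
    _ ≤ vi * v2 * √(gram ℝ (Q ∘ u)).det :=
      mul_le_mul_of_nonneg_left (Real.sqrt_le_sqrt hPQ) (mul_nonneg hvi.nonneg hv2.nonneg)
    _ = v1 * v2 := by rw [hv1u]; ring

/-- Rank and determinant (un)crossing for two primitive sublattices. -/
theorem rank_det_uncrossing {n : ℕ} (L L1 L2 : Submodule ℤ (EuclideanSpace ℝ (Fin n)))
    (hL : IsLatticeOfRank L n) (h1 : L1 ≤ L) (h2 : L2 ≤ L)
    (hprim1 : (L1 : Set (EuclideanSpace ℝ (Fin n))) =
      (L : Set (EuclideanSpace ℝ (Fin n))) ∩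
        (Submodule.span ℝ (L1 : Set (EuclideanSpace ℝ (Fin n))) :
          Set (EuclideanSpace ℝ (Fin n))))
    (hprim2 : (L2 : Set (EuclideanSpace ℝ (Fin n))) =
      (L : Set (EuclideanSpace ℝ (Fin n))) ∩
        (Submodule.span ℝ (L2 : Set (EuclideanSpace ℝ (Fin n))) :
          Set (EuclideanSpace ℝ (Fin n))))
    (d1 d2 di ds : ℕ)
    (hd1 : IsLatticeOfRank L1 d1) (hd2 : IsLatticeOfRank L2 d2)
    (hdi : IsLatticeOfRank (L1 ⊓ L2) di) (hds : IsLatticeOfRank (L1 ⊔ L2) ds)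
    (v1 v2 vi vs : ℝ)
    (hv1 : latHasDet (L1 : Set (EuclideanSpace ℝ (Fin n))) v1)
    (hv2 : latHasDet (L2 : Set (EuclideanSpace ℝ (Fin n))) v2)
    (hvi : latHasDet ((L1 ⊓ L2 : Submodule ℤ (EuclideanSpace ℝ (Fin n))) :
      Set (EuclideanSpace ℝ (Fin n))) vi)
    (hvs : latHasDet ((L1 ⊔ L2 : Submodule ℤ (EuclideanSpace ℝ (Fin n))) :
      Set (EuclideanSpace ℝ (Fin n))) vs) :
    d1 + d2 = di + ds ∧ vi * vs ≤ v1 * v2 :=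
  rank_det_uncrossing_general L L1 L2 h1 h2 hprim2 d1 d2 di ds hd1 hd2 hdi hds v1 v2 vi vs hv1 hv2
    hvi hvs
end
end

section
/- The direct sum of two stable lattices is stable: if M1 in R^n and M2 in R^m are stable lattices, then M1 ⊕ M2 = {(x,y) : x in M1, y in M2} is a stable lattice in R^(n+m). -/
open scoped Real Pointwise
open MeasureTheory Set

noncomputable section

variable {E : Type*} [NormedAddCommGroup E] [InnerProductSpace ℝ E]

/-!
Let `L` be a sublattice of `M₁ ⊕ M₂`, let `K = L ∩ (M₁ ⊕ 0)` and let `N ⊆ M₂` be the projection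
of `L` to the second factor. A basis of `K` together with lifts to `L` of a basis of `N` is a
basis of `L`. Orthogonalizing the lifts against `K` does not change the Gram determinant and makes
it split as `det K` times the Gram determinant of the orthogonalized lifts. These still project
onto the basis of `N`, and projecting can only decrease a Gram determinant: the Gram matrix is the
sum of the Gram matrices of the two orthogonal components, and `det` is monotone on positive
semidefinite matrices. Hence `det L ≥ det K · det N ≥ 1`, as `K` is isometric to a sublattice
of `M₁`. The direct sum itself has determinant one because its Gram matrix is block diagonal.
-/

open Submodule Matrix
open scoped InnerProductSpace

namespace Matrix

variable {ι : Type*} [Fintype ι] [DecidableEq ι]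

lemma PosSemidef.one_le_det_one_add_s4 {M : Matrix ι ι ℝ} (hM : M.PosSemidef) :
    1 ≤ (1 + M).det := by
  have hH : (1 + M).IsHermitian := isHermitian_one.add hM.1
  rw [hH.det_eq_prod_eigenvalues]
  refine Finset.one_le_prod fun i _ => ?_
  -- each eigenvalue of `1 + M` is `1 + vᴴ M v` for a unit eigenvector `v`
  set v := hH.eigenvectorBasis i
  have hv : star ⇑v ⬝ᵥ ⇑v = 1 := by
    rw [← hH.eigenvectorBasis.inner_eq_one i, EuclideanSpace.inner_eq_star_dotProduct,
      dotProduct_comm]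
  rw [hH.eigenvalues_eq, add_mulVec, one_mulVec, dotProduct_add, hv]
  simpa using hM.dotProduct_mulVec_nonneg v

open scoped MatrixOrder in
lemma PosSemidef.det_le_det_add_s4 {A B : Matrix ι ι ℝ} (hA : A.PosSemidef) (hB : B.PosSemidef) :
    B.det ≤ (A + B).det := by
  rcases eq_or_ne B.det 0 with hB0 | hB0
  · rw [hB0]; exact (hA.add hB).det_nonneg
  -- `A + B = S (1 + S⁻¹ A S⁻¹) S` with `S = √B` invertible
  set S := CFC.sqrt B
  have hSS : S * S = B := CFC.sqrt_mul_sqrt_self B hB.nonneg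
  have hS : IsUnit S.det :=
    isUnit_iff_ne_zero.mpr fun h => hB0 (by rw [← hSS, det_mul, h, zero_mul])
  have hSH : Sᴴ = S := (CFC.sqrt_nonneg B).posSemidef.1
  have hM : (S⁻¹ * A * S⁻¹).PosSemidef := by
    simpa only [conjTranspose_nonsing_inv, hSH] using hA.mul_mul_conjTranspose_same S⁻¹
  have hAB : A + B = S * (1 + S⁻¹ * A * S⁻¹) * S := by
    rw [add_comm]
    simp [Matrix.mul_add, Matrix.add_mul, hSS, Matrix.mul_assoc, mul_nonsing_inv _ hS,
      nonsing_inv_mul _ hS, ← Matrix.mul_assoc S S⁻¹]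
  calc B.det = B.det * 1 := (mul_one _).symm
    _ ≤ B.det * (1 + S⁻¹ * A * S⁻¹).det :=
      mul_le_mul_of_nonneg_left hM.one_le_det_one_add_s4 hB.det_nonneg
    _ = (A + B).det := by rw [hAB, det_mul, det_mul, ← hSS, det_mul]; ring

end Matrix

section Gram

variable {ι κ : Type*} [Fintype ι]

lemma gram_linearCombination (T : Matrix κ ι ℝ) (b : ι → E) :
    gram ℝ (fun k => ∑ i, T k i • b i) = T * gram ℝ b * Tᵀ := by
  ext k l
  simp only [gram_apply, mul_apply, transpose_apply, inner_sum, sum_inner, real_inner_smul_left,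
    real_inner_smul_right, Finset.sum_mul]
  exact Finset.sum_congr rfl fun i _ => Finset.sum_congr rfl fun j _ => by ring

variable [Fintype κ] [DecidableEq ι] [DecidableEq κ]

lemma det_gram_comp_equiv (e : ι ≃ κ) (v : κ → E) :
    (gram ℝ (v ∘ e)).det = (gram ℝ v).det :=
  det_submatrix_equiv_self e (gram ℝ v)

lemma det_gram_sum_elim_of_inner_eq_zero {u : ι → E} {w : κ → E}
    (h : ∀ i j, ⟪u i, w j⟫_ℝ = 0) :
    (gram ℝ (Sum.elim u w)).det = (gram ℝ u).det * (gram ℝ w).det := by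
  have : gram ℝ (Sum.elim u w) = fromBlocks (gram ℝ u) 0 0 (gram ℝ w) := by
    ext (i | i) (j | j)
    · rfl
    · exact h i j
    · exact (real_inner_comm _ _).trans (h j i)
    · rfl
  rw [this, det_fromBlocks_zero₁₂]

lemma det_gram_sum_elim_sub_of_mem_span {a : ι → E} (w : κ → E) {z : κ → E}
    (hz : ∀ j, z j ∈ span ℝ (Set.range a)) :
    (gram ℝ (Sum.elim a (w - z))).det = (gram ℝ (Sum.elim a w)).det := by
  choose S hS using fun j => (mem_span_range_iff_exists_fun ℝ).mp (hz j)
  set T : Matrix (ι ⊕ κ) (ι ⊕ κ) ℝ := fromBlocks 1 0 (-of S) 1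
  have hT : Sum.elim a (w - z) = fun k => ∑ l, T k l • Sum.elim a w l := by
    ext (i | j) <;> simp [T, Fintype.sum_sum_type, one_apply, ite_smul, ← hS, sub_eq_neg_add]
  rw [hT, gram_linearCombination, det_mul, det_mul, det_transpose]
  simp [T]

lemma det_gram_mul_det_gram_comp_le {F G : Type*} [NormedAddCommGroup F]
    [InnerProductSpace ℝ F] [NormedAddCommGroup G] [InnerProductSpace ℝ G]
    (Q : E →ₗ[ℝ] F) (P : E →ₗ[ℝ] G) (hQP : ∀ x y, ⟪x, y⟫_ℝ = ⟪Q x, Q y⟫_ℝ + ⟪P x, P y⟫_ℝ)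
    {a : ι → E} (ha : ∀ i, P (a i) = 0) (w : κ → E) :
    (gram ℝ a).det * (gram ℝ (P ∘ w)).det ≤ (gram ℝ (Sum.elim a w)).det := by
  set W := span ℝ (Set.range a)
  have : FiniteDimensional ℝ W := FiniteDimensional.span_of_finite ℝ (Set.finite_range a)
  set z : κ → E := fun j => W.starProjection (w j)
  have hz : ∀ j, z j ∈ W := fun j => W.starProjection_apply_mem (w j)
  have hperp : ∀ i j, ⟪a i, (w - z) j⟫_ℝ = 0 := fun i j =>
    (mem_orthogonal W _).mp (W.sub_starProjection_mem_orthogonal (w j)) _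
      (subset_span (Set.mem_range_self i))
  have hPz : P ∘ (w - z) = P ∘ w := by
    have hWP : W ≤ LinearMap.ker P := span_le.mpr (Set.range_subset_iff.mpr ha)
    ext1 j
    simp [LinearMap.mem_ker.mp (hWP (hz j))]
  have hgram : gram ℝ (w - z) = gram ℝ (Q ∘ (w - z)) + gram ℝ (P ∘ w) := by
    ext i j
    rw [← hPz]
    exact hQP _ _
  calc (gram ℝ a).det * (gram ℝ (P ∘ w)).det
      ≤ (gram ℝ a).det * (gram ℝ (w - z)).det := by
        rw [hgram]
        exact mul_le_mul_of_nonneg_left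
          ((posSemidef_gram ℝ _).det_le_det_add_s4 (posSemidef_gram ℝ _))
          (posSemidef_gram ℝ a).det_nonneg
    _ = (gram ℝ (Sum.elim a (w - z))).det := (det_gram_sum_elim_of_inner_eq_zero hperp).symm
    _ = (gram ℝ (Sum.elim a w)).det := det_gram_sum_elim_sub_of_mem_span w hz

end Gram

section Lattice

variable {ι κ V W : Type*} [AddCommGroup V] [Module ℝ V] [AddCommGroup W] [Module ℝ W]

lemma Submodule.span_sum_elim_eq {R M N : Type*} [Ring R] [AddCommGroup M] [Module R M]
    [AddCommGroup N] [Module R N] (f : M →ₗ[R] N) {L : Submodule R M} {a : ι → M} {w : κ → M}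
    (ha : span R (Set.range a) = L ⊓ LinearMap.ker f) (hw : ∀ j, w j ∈ L)
    (hfw : span R (Set.range (f ∘ w)) = L.map f) :
    span R (Set.range (Sum.elim a w)) = L := by
  set S := span R (Set.range (Sum.elim a w))
  have haS : span R (Set.range a) ≤ S := span_mono (by simp [Sum.elim_range])
  have hwS : span R (Set.range w) ≤ S := span_mono (by simp [Sum.elim_range])
  have hSL : S ≤ L := span_le.mpr <| by
    rintro _ ⟨i | j, rfl⟩
    · exact (ha.le (subset_span ⟨i, rfl⟩)).1
    · exact hw j
  refine hSL.eq_of_not_lt fun hlt => ?_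
  rcases map_strict_mono_or_ker_sup_lt_ker_sup f hlt with h | h
  · refine h.not_ge ?_
    rw [← hfw, Set.range_comp, ← map_span]
    exact map_mono hwS
  · exact h.not_ge (le_inf inf_le_left (by rw [inf_comm, ← ha]; exact haS))

lemma LinearIndependent.sum_elim_of_comp (P : V →ₗ[ℝ] W) {a : ι → V} {w : κ → V}
    (ha : LinearIndependent ℝ a) (haP : ∀ i, P (a i) = 0) (hw : LinearIndependent ℝ (P ∘ w)) :
    LinearIndependent ℝ (Sum.elim a w) :=
  LinearIndependent.sumElim_of_quotient (M' := LinearMap.ker P) (f := fun i => ⟨a i, haP i⟩)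
    (.of_comp (LinearMap.ker P).subtype ha) w
    (.of_comp ((LinearMap.ker P).liftQ P le_rfl) (by simpa [Function.comp_def] using hw))

/-- `span ℝ b` is the base change of the free `ℤ`-module `span ℤ b` to `ℝ`, which is flat
over `ℤ`. -/
lemma LinearIndependent.real_of_int {u : ι → V} (hu : LinearIndependent ℤ u)
    {b : κ → V} (hb : LinearIndependent ℝ b) (hmem : ∀ i, u i ∈ span ℤ (Set.range b)) :
    LinearIndependent ℝ u := by
  set M := span ℤ (Set.range b)
  let β : Module.Basis κ ℤ M := .span (hb.restrict_scalars' ℤ)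
  let f : TensorProduct ℤ ℝ M →ₗ[ℝ] V := M.subtype.liftBaseChange ℝ
  have hf : Function.Injective f := by
    have : f = Finsupp.linearCombination ℝ b ∘ₗ (β.baseChange ℝ).repr.toLinearMap := by
      refine (β.baseChange ℝ).ext fun i => ?_
      rw [LinearMap.comp_apply, LinearEquiv.coe_coe, Module.Basis.repr_self,
        Finsupp.linearCombination_single, one_smul, Module.Basis.baseChange_apply,
        LinearMap.liftBaseChange_tmul, one_smul]
      exact congrArg Subtype.val (Module.Basis.span_apply _ i)
    rw [this]
    exact hb.finsuppLinearCombination_injective.comp (LinearEquiv.injective _)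
  have hu' : LinearIndependent ℤ (fun i => (⟨u i, hmem i⟩ : M)) := .of_comp M.subtype hu
  simpa [Function.comp_def, f] using
    (Module.Flat.linearIndependent_one_tmul (S := ℝ) hu').map' f (LinearMap.ker_eq_bot.mpr hf)

lemma exists_linearIndependent_span_int_eq [Finite κ] {b : κ → V}
    (hb : LinearIndependent ℝ b) {N : Submodule ℤ V} (hN : N ≤ span ℤ (Set.range b)) :
    ∃ (r : ℕ) (c : Fin r → V), LinearIndependent ℝ c ∧ span ℤ (Set.range c) = N := by
  obtain ⟨r, β⟩ := basisOfPidOfLESpan (hb.restrict_scalars' ℤ) hN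
  refine ⟨r, N.subtype ∘ β, ?_, ?_⟩
  · exact (β.linearIndependent.map' N.subtype N.ker_subtype).real_of_int hb
      fun i => hN (β i).2
  · rw [Set.range_comp, ← map_span, β.span_eq, Submodule.map_top, range_subtype]

lemma det_gram_eq_of_span_int_eq_s4 [Fintype ι] [Fintype κ] [DecidableEq ι] [DecidableEq κ]
    {b : ι → E} {c : κ → E} (hb : LinearIndependent ℝ b) (hc : LinearIndependent ℝ c)
    (h : span ℤ (Set.range b) = span ℤ (Set.range c)) :
    (gram ℝ b).det = (gram ℝ c).det := by
  let βb := Module.Basis.span (hb.restrict_scalars' ℤ)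
  let βc := (Module.Basis.span (hc.restrict_scalars' ℤ)).map (LinearEquiv.ofEq _ _ h.symm)
  let e := βb.indexEquiv βc
  let γ := βc.reindex e.symm
  -- the change of basis from `βb` to `γ` is unimodular
  let P : Matrix ι ι ℝ := (βb.toMatrix γ).map Int.cast
  have hP : P.det ^ 2 = 1 := by
    let _ := βb.invertibleToMatrix γ
    rw [show P = (Int.castRingHom ℝ).mapMatrix (βb.toMatrix γ) from rfl, ← RingHom.map_det,
      ← map_pow, Int.isUnit_sq (isUnit_det_of_invertible _), map_one]
  have hcb : c ∘ e = fun j => ∑ i, Pᵀ j i • b i := by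
    ext1 j
    have := congrArg Subtype.val (βb.sum_toMatrix_smul_self γ j)
    simpa [P, γ, βc, βb, Int.cast_smul_eq_zsmul] using this.symm
  rw [← det_gram_comp_equiv e c, hcb, gram_linearCombination, det_mul, det_mul, det_transpose,
    transpose_transpose]
  linear_combination -(gram ℝ b).det * hP

lemma exists_linearIndependent_sum_elim_span_int_eq (P : V →ₗ[ℝ] W) [Finite ι] [Finite κ]
    {b : ι → V} (hb : LinearIndependent ℝ b) {b' : κ → W} (hb' : LinearIndependent ℝ b')
    (hPb : ∀ z ∈ span ℤ (Set.range b), P z ∈ span ℤ (Set.range b')) :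
    ∃ (r s : ℕ) (a : Fin r → V) (w : Fin s → V),
      (∀ i, a i ∈ span ℤ (Set.range b) ∧ P (a i) = 0) ∧ (∀ j, w j ∈ span ℤ (Set.range b)) ∧
      LinearIndependent ℝ a ∧ LinearIndependent ℝ (P ∘ w) ∧
      span ℤ (Set.range (Sum.elim a w)) = span ℤ (Set.range b) := by
  set L := span ℤ (Set.range b)
  set P' := P.restrictScalars ℤ
  obtain ⟨s, c, hc, hcL⟩ :=
    exists_linearIndependent_span_int_eq hb' (N := L.map P') (map_le_iff_le_comap.mpr hPb)
  choose w hwL hwc using fun j => mem_map.mp (hcL.le (subset_span ⟨j, rfl⟩))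
  obtain ⟨r, a, ha, haL⟩ :=
    exists_linearIndependent_span_int_eq hb (N := L ⊓ LinearMap.ker P') inf_le_left
  have haK : ∀ i, a i ∈ L ⊓ LinearMap.ker P' := fun i => haL.le (subset_span ⟨i, rfl⟩)
  have hPw : P ∘ w = c := funext hwc
  exact ⟨r, s, a, w, fun i => haK i, hwL, ha, hPw ▸ hc, span_sum_elim_eq P' haL hwL (hPw ▸ hcL)⟩

end Lattice

section Stable

variable {F G : Type*} [NormedAddCommGroup F] [InnerProductSpace ℝ F]
  [NormedAddCommGroup G] [InnerProductSpace ℝ G]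

lemma IsStable.one_le_det_gram {M : Submodule ℤ E} (hM : IsStable (M : Set E)) {r : ℕ}
    {c : Fin r → E} (hc : LinearIndependent ℝ c) (hcM : ∀ i, c i ∈ M) : 1 ≤ (gram ℝ c).det :=
  Real.one_le_sqrt.mp (hM.2 _ (span_le.mpr (Set.range_subset_iff.mpr hcM)) _ ⟨r, c, hc, rfl, rfl⟩)

theorem one_le_det_gram_of_isStable_of_proj_mem (P₁ : E →ₗ[ℝ] F) (P₂ : E →ₗ[ℝ] G)
    (hP : ∀ x y, ⟪x, y⟫_ℝ = ⟪P₁ x, P₁ y⟫_ℝ + ⟪P₂ x, P₂ y⟫_ℝ) {M₁ : Submodule ℤ F}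
    {M₂ : Submodule ℤ G} (hs₁ : IsStable (M₁ : Set F)) (hs₂ : IsStable (M₂ : Set G)) {d : ℕ}
    {b : Fin d → E} (hb : LinearIndependent ℝ b) (h₁ : ∀ z ∈ span ℤ (Set.range b), P₁ z ∈ M₁)
    (h₂ : ∀ z ∈ span ℤ (Set.range b), P₂ z ∈ M₂) :
    1 ≤ (gram ℝ b).det := by
  obtain ⟨_, b₂, hb₂, hM₂, -⟩ := hs₂.1
  obtain ⟨r, s, a, w, ha, hw, haLI, hwLI, hspan⟩ :=
    exists_linearIndependent_sum_elim_span_int_eq P₂ hb hb₂ fun z hz => by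
      rw [← SetLike.mem_coe, ← hM₂]; exact h₂ z hz
  have hgram : gram ℝ (P₁ ∘ a) = gram ℝ a := by
    ext i j
    simp [gram_apply, hP (a i) (a j), (ha i).2, (ha j).2]
  have hc₁ : 1 ≤ (gram ℝ (P₁ ∘ a)).det :=
    hs₁.one_le_det_gram (linearIndependent_of_det_gram_ne_zero
      (hgram ▸ det_gram_ne_zero_iff_linearIndependent.mpr haLI)) fun i => h₁ _ (ha i).1
  have hc₂ : 1 ≤ (gram ℝ (P₂ ∘ w)).det := hs₂.one_le_det_gram hwLI fun j => h₂ _ (hw j)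
  calc 1 ≤ (gram ℝ (P₁ ∘ a)).det * (gram ℝ (P₂ ∘ w)).det := one_le_mul_of_one_le_of_one_le hc₁ hc₂
    _ ≤ (gram ℝ (Sum.elim a w)).det :=
      hgram ▸ det_gram_mul_det_gram_comp_le P₁ P₂ hP (fun i => (ha i).2) w
    _ = (gram ℝ b).det :=
      det_gram_eq_of_span_int_eq_s4 (haLI.sum_elim_of_comp P₂ (fun i => (ha i).2) hwLI) hb hspan

end Stable

section Append

variable {n m : ℕ}

lemma appendE_eq_finAddEquivProd_symm (x : EuclideanSpace ℝ (Fin n))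
    (y : EuclideanSpace ℝ (Fin m)) :
    appendE x y = EuclideanSpace.finAddEquivProd.symm (x, y) := by
  ext i
  refine Fin.addCases (fun j => ?_) (fun j => ?_) i <;> simp [appendE]

lemma inner_appendE (x x' : EuclideanSpace ℝ (Fin n)) (y y' : EuclideanSpace ℝ (Fin m)) :
    ⟪appendE x y, appendE x' y'⟫_ℝ = ⟪x, x'⟫_ℝ + ⟪y, y'⟫_ℝ := by
  simp only [PiLp.inner_apply, Fin.sum_univ_add]
  simp [appendE]

lemma inner_eq_inner_finAddEquivProd (z z' : EuclideanSpace ℝ (Fin (n + m))) :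
    ⟪z, z'⟫_ℝ = ⟪(EuclideanSpace.finAddEquivProd z).1, (EuclideanSpace.finAddEquivProd z').1⟫_ℝ +
      ⟪(EuclideanSpace.finAddEquivProd z).2, (EuclideanSpace.finAddEquivProd z').2⟫_ℝ := by
  have h := inner_appendE
    (EuclideanSpace.finAddEquivProd z).1 (EuclideanSpace.finAddEquivProd z').1
    (EuclideanSpace.finAddEquivProd z).2 (EuclideanSpace.finAddEquivProd z').2
  rwa [appendE_eq_finAddEquivProd_symm, appendE_eq_finAddEquivProd_symm, Prod.mk.eta, Prod.mk.eta,
    ContinuousLinearEquiv.symm_apply_apply, ContinuousLinearEquiv.symm_apply_apply] at h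

theorem latHasDet.append {A : Set (EuclideanSpace ℝ (Fin n))}
    {B : Set (EuclideanSpace ℝ (Fin m))} {v w : ℝ} (hA : latHasDet A v) (hB : latHasDet B w) :
    latHasDet {z | ∃ x ∈ A, ∃ y ∈ B, z = appendE x y} (v * w) := by
  obtain ⟨d₁, b₁, hb₁, rfl, rfl⟩ := hA
  obtain ⟨d₂, b₂, hb₂, rfl, rfl⟩ := hB
  set J : EuclideanSpace ℝ (Fin n) × EuclideanSpace ℝ (Fin m) →ₗ[ℤ]
      EuclideanSpace ℝ (Fin (n + m)) :=
    EuclideanSpace.finAddEquivProd.symm.toLinearEquiv.toLinearMap.restrictScalars ℤ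
  set u := Sum.elim (fun i => appendE (b₁ i) 0) (fun j => appendE 0 (b₂ j))
  have hdet : (gram ℝ u).det = (gram ℝ b₁).det * (gram ℝ b₂).det := by
    rw [det_gram_sum_elim_of_inner_eq_zero (by simp [inner_appendE])]
    congr 2 <;> ext <;> simp [gram_apply, inner_appendE]
  have hu : LinearIndependent ℝ u := linearIndependent_of_det_gram_ne_zero <| by
    rw [hdet]
    exact mul_ne_zero (det_gram_ne_zero_iff_linearIndependent.mpr hb₁)
      (det_gram_ne_zero_iff_linearIndependent.mpr hb₂)
  have hspan :
      span ℤ (Set.range u) = ((span ℤ (Set.range b₁)).prod (span ℤ (Set.range b₂))).map J := by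
    rw [← LinearMap.span_inl_union_inr, map_span]
    congr 1
    simp [u, Sum.elim_range, Set.image_union, ← Set.range_comp, Function.comp_def, J,
      appendE_eq_finAddEquivProd_symm]
  refine ⟨d₁ + d₂, u ∘ finSumFinEquiv.symm, hu.comp _ (Equiv.injective _), ?_, ?_⟩
  · rw [finSumFinEquiv.symm.surjective.range_comp, hspan]
    ext z
    simp [J, appendE_eq_finAddEquivProd_symm, eq_comm, and_assoc]
  · show _ = √(gram ℝ _).det
    rw [det_gram_comp_equiv, hdet, Real.sqrt_mul (posSemidef_gram ℝ b₁).det_nonneg]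
    rfl

end Append

theorem directSum_of_stable_isStable_general {n m : ℕ}
    (M1 : Submodule ℤ (EuclideanSpace ℝ (Fin n)))
    (M2 : Submodule ℤ (EuclideanSpace ℝ (Fin m)))
    (hs1 : IsStable (M1 : Set (EuclideanSpace ℝ (Fin n))))
    (hs2 : IsStable (M2 : Set (EuclideanSpace ℝ (Fin m)))) :
    IsStable {z : EuclideanSpace ℝ (Fin (n + m)) |
      ∃ x ∈ M1, ∃ y ∈ M2, z = appendE x y} := by
  refine ⟨by simpa using hs1.1.append hs2.1, ?_⟩
  rintro L hL v ⟨d, b, hb, hLb, rfl⟩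
  set p := (EuclideanSpace.finAddEquivProd (𝕜 := ℝ) (n := n) (m := m)).toLinearEquiv.toLinearMap
  have hp : ∀ z ∈ span ℤ (Set.range b), (p z).1 ∈ M1 ∧ (p z).2 ∈ M2 := by
    intro z hz
    obtain ⟨x, hx, y, hy, rfl⟩ := hL (by rwa [hLb])
    rw [appendE_eq_finAddEquivProd_symm]
    simpa [p] using ⟨hx, hy⟩
  exact Real.one_le_sqrt.mpr <| one_le_det_gram_of_isStable_of_proj_mem
    (LinearMap.fst ℝ _ _ ∘ₗ p) (LinearMap.snd ℝ _ _ ∘ₗ p) inner_eq_inner_finAddEquivProd hs1 hs2 hb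
    (fun z hz => (hp z hz).1) (fun z hz => (hp z hz).2)

/-- The direct sum of two stable lattices is stable. -/
theorem directSum_of_stable_isStable {n m : ℕ}
    (M1 : Submodule ℤ (EuclideanSpace ℝ (Fin n)))
    (M2 : Submodule ℤ (EuclideanSpace ℝ (Fin m)))
    (h1 : IsLatticeOfRank M1 n) (h2 : IsLatticeOfRank M2 m)
    (hs1 : IsStable (M1 : Set (EuclideanSpace ℝ (Fin n))))
    (hs2 : IsStable (M2 : Set (EuclideanSpace ℝ (Fin m)))) :
    IsStable {z : EuclideanSpace ℝ (Fin (n + m)) |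
      ∃ x ∈ M1, ∃ y ∈ M2, z = appendE x y} :=
  directSum_of_stable_isStable_general M1 M2 hs1 hs2
end
end

section
/- For any full-rank lattice L in R^n and any s > 0, rho_s(L) * gamma_s(V(L)) <= 1, where V(L) is the Voronoi cell of L and gamma_s is the Gaussian measure with parameter s. -/
open scoped Real Pointwise
open MeasureTheory Set

noncomputable section

variable {E : Type*} [NormedAddCommGroup E] [InnerProductSpace ℝ E]

/-! Write `ρ(x) = exp(-π‖x‖²)`. The Voronoi cell `V` of `L` is centrally symmetric, so
averaging the pointwise bound `ρ(v + x) + ρ(v - x) ≥ 2 ρ(v) ρ(x)` (AM-GM and the parallelogram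
law) over `x ∈ V` gives `ρ(v) γ(V) ≤ γ(v + V)`. The translates `v + V`, `v ∈ L`, overlap only
on perpendicular bisectors, which are null, so summing over `v` gives `ρ(L) γ(V) ≤ γ(ℝⁿ) = 1`.
Rescaling `L` by `s⁻¹` reduces the general parameter `s` to `s = 1`. -/

section Normed

variable {F : Type*} [NormedAddCommGroup F]

def gaussianWeight (x : F) : ℝ := Real.exp (-π * ‖x‖ ^ 2)

lemma gaussianWeight_inv_smul [NormedSpace ℝ F] (s : ℝ) (x : F) :
    gaussianWeight (s⁻¹ • x) = Real.exp (-π * ‖x‖ ^ 2 / s ^ 2) := by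
  rw [gaussianWeight, norm_smul, mul_pow, Real.norm_eq_abs, sq_abs, inv_pow]
  ring_nf

lemma neg_mem_voronoi {L : Submodule ℤ F} {x : F} (hx : x ∈ voronoi L) : -x ∈ voronoi L :=
  fun y hy => by
    rw [norm_neg, sub_neg_eq_add, ← norm_neg (y + x), neg_add']
    exact hx (-y) (neg_mem hy)

lemma neg_voronoi (L : Submodule ℤ F) : -voronoi L = voronoi L :=
  ext fun x => ⟨fun hx => by simpa using neg_mem_voronoi hx, neg_mem_voronoi⟩

lemma isClosed_voronoi (L : Submodule ℤ F) : IsClosed (voronoi L) := by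
  simp only [voronoi, ofPred_forall]
  exact isClosed_biInter fun y _ =>
    isClosed_le continuous_norm (continuous_const.sub continuous_id).norm

lemma voronoi_smul [NormedSpace ℝ F] {c : ℝ} (hc : c ≠ 0) (L : Submodule ℤ F) :
    voronoi (c • L) = c • voronoi L := by
  ext x
  obtain ⟨x, rfl⟩ : ∃ x', c • x' = x := ⟨c⁻¹ • x, smul_inv_smul₀ hc x⟩
  rw [smul_mem_smul_set_iff₀ hc]
  simp only [voronoi, mem_ofPred_eq, Submodule.mem_smul_pointwise_iff_exists, forall_exists_index,
    and_imp, forall_apply_eq_imp_iff₂, ← smul_sub, norm_smul]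
  exact forall₂_congr fun y _ => mul_le_mul_iff_of_pos_left (abs_pos.2 hc)

end Normed

lemma two_mul_gaussianWeight_mul_le (v x : E) :
    2 * (gaussianWeight v * gaussianWeight x) ≤
      gaussianWeight (v + x) + gaussianWeight (v - x) := by
  set a := Real.exp (-π * ‖v + x‖ ^ 2 / 2)
  set b := Real.exp (-π * ‖v - x‖ ^ 2 / 2)
  have hab : gaussianWeight v * gaussianWeight x = a * b := by
    simp only [gaussianWeight, a, b, ← Real.exp_add]
    congr 1
    linear_combination (π / 2) * parallelogram_law_with_norm ℝ v x
  have ha : gaussianWeight (v + x) = a ^ 2 := by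
    rw [gaussianWeight, ← Real.exp_nat_mul]; ring_nf
  have hb : gaussianWeight (v - x) = b ^ 2 := by
    rw [gaussianWeight, ← Real.exp_nat_mul]; ring_nf
  rw [hab, ha, hb, ← mul_assoc]
  exact two_mul_le_add_sq a b

lemma mem_perpBisector_of_mem_vadd_voronoi {L : Submodule ℤ E} {u w x : E}
    (hu : u ∈ L) (hw : w ∈ L) (hxu : x ∈ u +ᵥ voronoi L) (hxw : x ∈ w +ᵥ voronoi L) :
    x ∈ AffineSubspace.perpBisector u w := by
  rw [mem_vadd_set_iff_neg_vadd_mem, vadd_eq_add, neg_add_eq_sub] at hxu hxw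
  rw [AffineSubspace.mem_perpBisector_iff_dist_eq, dist_eq_norm, dist_eq_norm]
  refine le_antisymm ?_ ?_
  · simpa [norm_sub_rev] using hxu (w - u) (sub_mem hw hu)
  · simpa [norm_sub_rev] using hxw (u - w) (sub_mem hu hw)

section Measure

variable [FiniteDimensional ℝ E] [MeasurableSpace E] [BorelSpace E]

lemma integral_gaussianWeight : ∫ x : E, gaussianWeight x = 1 := by
  simpa [gaussianWeight, div_self Real.pi_pos.ne'] using
    GaussianFourier.integral_rexp_neg_mul_sq_norm (V := E) Real.pi_pos

lemma integrable_gaussianWeight : Integrable (gaussianWeight : E → ℝ) :=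
  .of_integral_ne_zero (by simp [integral_gaussianWeight])

lemma gaussianWeight_mul_setIntegral_le {W : Set E} (hW : MeasurableSet W) (hWneg : -W = W)
    (v : E) :
    gaussianWeight v * ∫ x in W, gaussianWeight x ≤ ∫ x in v +ᵥ W, gaussianWeight x := by
  have htranslate : ∫ x in v +ᵥ W, gaussianWeight x = ∫ x in W, gaussianWeight (v + x) := by
    rw [← image_vadd]
    exact (measurePreserving_add_left volume v).setIntegral_image_emb
      (measurableEmbedding_addLeft v) _ _
  have hreflect : ∫ x in W, gaussianWeight (v - x) = ∫ x in W, gaussianWeight (v + x) := by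
    conv_lhs => rw [← hWneg, ← image_neg_eq_neg,
      (Measure.measurePreserving_neg volume).setIntegral_image_emb
        (MeasurableEquiv.neg E).measurableEmbedding]
    simp only [sub_neg_eq_add]
  have hint := integrable_gaussianWeight (E := E)
  have hmono : ∫ x in W, 2 * (gaussianWeight v * gaussianWeight x) ≤
      ∫ x in W, (gaussianWeight (v + x) + gaussianWeight (v - x)) :=
    setIntegral_mono_on ((hint.const_mul _).const_mul _).integrableOn
      ((hint.comp_add_left v).add (hint.comp_sub_left v)).integrableOn
      hW fun x _ => two_mul_gaussianWeight_mul_le v x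
  rw [integral_add (hint.comp_add_left v).integrableOn (hint.comp_sub_left v).integrableOn,
    hreflect, integral_const_mul, integral_const_mul] at hmono
  linarith

lemma aedisjoint_vadd_voronoi (L : Submodule ℤ E) :
    Pairwise (Function.onFun (AEDisjoint volume) fun u : L => (u : E) +ᵥ voronoi L) := by
  intro u w huw
  refine measure_mono_null (fun x hx => mem_perpBisector_of_mem_vadd_voronoi u.2 w.2 hx.1 hx.2)
    (Measure.addHaar_affineSubspace _ _ ?_)
  simpa [AffineSubspace.perpBisector_eq_top] using Subtype.coe_injective.ne huw

theorem tsum_gaussianWeight_mul_integral_voronoi_le_one (L : Submodule ℤ E) :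
    (∑' u : L, gaussianWeight (u : E)) * ∫ x in voronoi L, gaussianWeight x ≤ 1 := by
  -- Summability forces `L` to be countable, which the union bound over its translates needs.
  by_cases hsum : Summable fun u : L => gaussianWeight (u : E)
  swap
  · simp [tsum_eq_zero_of_not_summable hsum]
  have : Countable L := countable_univ_iff.mp <| by
    simpa [Function.support, gaussianWeight, (Real.exp_pos _).ne'] using hsum.countable_support
  have hV := (isClosed_voronoi L).measurableSet
  have hunion := hasSum_integral_iUnion_ae
    (fun u : L => (hV.const_vadd (u : E)).nullMeasurableSet) (aedisjoint_vadd_voronoi L)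
    integrable_gaussianWeight.integrableOn
  calc (∑' u : L, gaussianWeight (u : E)) * ∫ x in voronoi L, gaussianWeight x
      = ∑' u : L, gaussianWeight (u : E) * ∫ x in voronoi L, gaussianWeight x :=
        tsum_mul_right.symm
    _ ≤ ∫ x in ⋃ u : L, (u : E) +ᵥ voronoi L, gaussianWeight x :=
        hasSum_le (fun u : L => gaussianWeight_mul_setIntegral_le hV (neg_voronoi L) u)
          (hsum.mul_right _).hasSum hunion
    _ ≤ ∫ x, gaussianWeight x :=
        setIntegral_le_integral integrable_gaussianWeight
          (.of_forall fun x => (Real.exp_pos _).le)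
    _ = 1 := integral_gaussianWeight

end Measure

lemma rhoS_eq_tsum_gaussianWeight {s : ℝ} (hs : s ≠ 0) (A : Set E) :
    rhoS s A = ∑' v : ↥(s⁻¹ • A), gaussianWeight (v : E) := by
  rw [← image_smul, tsum_image _ (smul_right_injective E (inv_ne_zero hs)).injOn]
  simp only [gaussianWeight_inv_smul, rhoS]

theorem rho_mul_gauss_voronoi_le_one_general {n : ℕ}
    (L : Submodule ℤ (EuclideanSpace ℝ (Fin n)))
    (s : ℝ) (hs : 0 < s) :
    rhoS s (L : Set (EuclideanSpace ℝ (Fin n))) * gauss s (voronoi L) ≤ 1 := by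
  have h := tsum_gaussianWeight_mul_integral_voronoi_le_one (s⁻¹ • L)
  rw [voronoi_smul (inv_ne_zero hs.ne')] at h
  rw [rhoS_eq_tsum_gaussianWeight hs.ne', ← Submodule.coe_pointwise_smul]
  exact h

/-- `ρ_s(L) · γ_s(V(L)) ≤ 1`. -/
theorem rho_mul_gauss_voronoi_le_one {n : ℕ}
    (L : Submodule ℤ (EuclideanSpace ℝ (Fin n))) (hL : IsLatticeOfRank L n)
    (s : ℝ) (hs : 0 < s) :
    rhoS s (L : Set (EuclideanSpace ℝ (Fin n))) * gauss s (voronoi L) ≤ 1 :=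
  rho_mul_gauss_voronoi_le_one_general L s hs
end
end

section
/- For any full-rank lattice L in R^n and any s > 0, gamma_s(V(L)) * rho_s(L) >= exp(-4n)/2, where V(L) is the Voronoi cell of L. -/
open scoped Real Pointwise
open MeasureTheory Set

noncomputable section

variable {E : Type*} [NormedAddCommGroup E] [InnerProductSpace ℝ E]

/-!
The lattice translates of the Voronoi cell cover space, and for `v ∈ V(L)`, `y ∈ L` one has
`‖v‖ ≤ ‖v + y‖`, hence `‖y‖ ≤ 2‖v + y‖` and `‖y‖² + ‖v‖² ≤ 5‖v + y‖²`. Integrating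
`exp (-5π‖x‖²)`, of total mass `5^(-n/2)`, over the cover of space by the translates
`(y + V(L)) / s` therefore gives `5^(-n/2) ≤ ρ_s(L) γ_s(V(L))`, and `5^(-n/2) ≥ e^(-4n) / 2`.
-/

open scoped ENNReal

theorem Real.exp_neg_le_factorial_div_pow {x : ℝ} (hx : 0 < x) (k : ℕ) :
    Real.exp (-x) ≤ k.factorial / x ^ k := by
  rw [Real.exp_neg, inv_le_iff_one_le_mul₀ (Real.exp_pos x), ← div_le_iff₀' (by positivity),
    one_div_div]
  exact Real.pow_div_factorial_le_exp x hx.le k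

theorem exp_neg_four_mul_div_two_le_one_div_five_rpow {t : ℝ} (ht : 0 ≤ t) :
    Real.exp (-(4 * t)) / 2 ≤ (1 / 5 : ℝ) ^ (t / 2) := by
  have hlog : Real.log 5 ≤ 4 := by
    linarith [Real.log_le_sub_one_of_pos (show (0 : ℝ) < 5 by norm_num)]
  calc Real.exp (-(4 * t)) / 2 ≤ Real.exp (-(4 * t)) := half_le_self (Real.exp_pos _).le
    _ ≤ Real.exp (Real.log (1 / 5) * (t / 2)) := by
        rw [Real.exp_le_exp, one_div, Real.log_inv]
        nlinarith [Real.log_nonneg (show (1 : ℝ) ≤ 5 by norm_num)]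
    _ = (1 / 5 : ℝ) ^ (t / 2) := (Real.rpow_def_of_pos (by norm_num) _).symm

theorem norm_sq_add_norm_sq_le_five_mul {F : Type*} [SeminormedAddCommGroup F] {x c : F}
    (h : ‖x‖ ≤ ‖x + c‖) : ‖c‖ ^ 2 + ‖x‖ ^ 2 ≤ 5 * ‖x + c‖ ^ 2 := by
  have hc : ‖c‖ ≤ 2 * ‖x + c‖ :=
    calc ‖c‖ = ‖(x + c) - x‖ := by rw [add_sub_cancel_left]
      _ ≤ ‖x + c‖ + ‖x‖ := norm_sub_le _ _
      _ ≤ 2 * ‖x + c‖ := by linarith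
  nlinarith [norm_nonneg x, norm_nonneg c]

theorem exp_neg_five_mul_norm_add_sq_le {F : Type*} [SeminormedAddCommGroup F] {a : ℝ}
    (ha : 0 ≤ a) {x c : F} (h : ‖x‖ ≤ ‖x + c‖) :
    Real.exp (-(5 * a) * ‖x + c‖ ^ 2) ≤ Real.exp (-a * ‖c‖ ^ 2) * Real.exp (-a * ‖x‖ ^ 2) := by
  rw [← Real.exp_add, Real.exp_le_exp]
  nlinarith [norm_sq_add_norm_sq_le_five_mul h]

theorem lintegral_le_tsum_mul_setLIntegral {G ι : Type*} [MeasurableSpace G] [AddGroup G]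
    [MeasurableAdd G] {μ : Measure G} [μ.IsAddRightInvariant] [Countable ι] {c : ι → G}
    {W : Set G} (hcover : ⋃ i, (· + c i) '' W = univ) {f h : G → ℝ≥0∞} {g : ι → ℝ≥0∞}
    (hh : Measurable h) (hfgh : ∀ i, ∀ x ∈ W, f (x + c i) ≤ g i * h x) :
    ∫⁻ x, f x ∂μ ≤ (∑' i, g i) * ∫⁻ x in W, h x ∂μ :=
  calc ∫⁻ x, f x ∂μ = ∫⁻ x in ⋃ i, (· + c i) '' W, f x ∂μ := by
        rw [hcover, Measure.restrict_univ]
    _ ≤ ∑' i, ∫⁻ x in (· + c i) '' W, f x ∂μ := lintegral_iUnion_le _ _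
    _ = ∑' i, ∫⁻ x in W, f (x + c i) ∂μ := tsum_congr fun i =>
        ((measurePreserving_add_right μ (c i)).setLIntegral_comp_emb
          (MeasurableEquiv.addRight (c i)).measurableEmbedding f W).symm
    _ ≤ ∑' i, ∫⁻ x in W, g i * h x ∂μ := ENNReal.tsum_le_tsum fun i =>
        setLIntegral_mono (hh.const_mul _) (hfgh i)
    _ = (∑' i, g i) * ∫⁻ x in W, h x ∂μ := by
        simp_rw [lintegral_const_mul _ hh, ENNReal.tsum_mul_right]

section Lattice

variable {F : Type*} [NormedAddCommGroup F]

theorem rhoS_nonneg (s : ℝ) (A : Set F) : 0 ≤ rhoS s A :=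
  tsum_nonneg fun _ => (Real.exp_pos _).le

theorem summable_exp_neg_mul_norm_sq [NormedSpace ℝ F] [FiniteDimensional ℝ F]
    (L : Submodule ℤ F) [DiscreteTopology L] {a : ℝ} (ha : 0 < a) :
    Summable fun z : L => Real.exp (-a * ‖(z : F)‖ ^ 2) := by
  set k := Module.finrank ℤ L + 1
  refine ((ZLattice.summable_norm_pow_inv L (2 * k) (by omega)).mul_left
    (k.factorial / a ^ k)).of_norm_bounded_eventually ?_
  filter_upwards [(Set.finite_singleton (0 : L)).compl_mem_cofinite] with z hz
  have hz : 0 < ‖z‖ := norm_pos_iff.2 hz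
  rw [Real.norm_of_nonneg (Real.exp_pos _).le, neg_mul]
  calc Real.exp (-(a * ‖(z : F)‖ ^ 2)) ≤ k.factorial / (a * ‖z‖ ^ 2) ^ k :=
        Real.exp_neg_le_factorial_div_pow (by positivity) k
    _ = k.factorial / a ^ k * ‖z‖⁻¹ ^ (2 * k) := by
        rw [mul_pow, ← pow_mul, inv_pow, div_mul_eq_mul_div, mul_comm 2 k]
        field_simp

theorem norm_le_norm_add_of_mem_voronoi {L : Submodule ℤ F} {v y : F} (hv : v ∈ voronoi L)
    (hy : y ∈ L) : ‖v‖ ≤ ‖v + y‖ := by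
  simpa [← sub_eq_neg_add, norm_sub_rev] using hv (-y) (L.neg_mem hy)

theorem norm_le_norm_add_smul_of_mem_smul_voronoi [NormedSpace ℝ F] {L : Submodule ℤ F}
    {t : ℝ} {x y : F} (hx : x ∈ t • voronoi L) (hy : y ∈ L) : ‖x‖ ≤ ‖x + t • y‖ := by
  obtain ⟨v, hv, rfl⟩ := hx
  rw [← smul_add, norm_smul, norm_smul]
  exact mul_le_mul_of_nonneg_left (norm_le_norm_add_of_mem_voronoi hv hy) (norm_nonneg t)

theorem exists_sub_mem_voronoi [ProperSpace F] {L : Submodule ℤ F} (hL : IsClosed (L : Set F))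
    (x : F) : ∃ y ∈ L, x - y ∈ voronoi L := by
  obtain ⟨y, hyL, hy⟩ := hL.exists_infDist_eq_dist ⟨0, L.zero_mem⟩ x
  refine ⟨y, hyL, fun z hz => ?_⟩
  have := Metric.infDist_le_dist_of_mem (x := x) (L.add_mem hyL hz)
  rwa [hy, dist_eq_norm, dist_eq_norm, ← sub_sub, ← norm_neg (x - y - z), neg_sub] at this

theorem iUnion_image_add_smul_smul_voronoi_eq_univ [NormedSpace ℝ F] [ProperSpace F]
    {L : Submodule ℤ F} (hL : IsClosed (L : Set F)) {t : ℝ} (ht : t ≠ 0) :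
    ⋃ y : L, (· + t • (y : F)) '' (t • voronoi L) = univ := by
  refine eq_univ_of_forall fun x => ?_
  obtain ⟨y, hy, hxy⟩ := exists_sub_mem_voronoi hL (t⁻¹ • x)
  refine mem_iUnion.2 ⟨⟨y, hy⟩, t • (t⁻¹ • x - y), smul_mem_smul_set hxy, ?_⟩
  simp [smul_sub, smul_smul, ht]

end Lattice

section Gaussian

variable [FiniteDimensional ℝ E] [MeasurableSpace E] [BorelSpace E]

theorem integrable_exp_neg_mul_norm_sq {b : ℝ} (hb : 0 < b) :
    Integrable fun x : E => Real.exp (-b * ‖x‖ ^ 2) :=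
  .of_integral_ne_zero <| by
    rw [GaussianFourier.integral_rexp_neg_mul_sq_norm hb]
    positivity

theorem lintegral_exp_neg_mul_norm_sq {b : ℝ} (hb : 0 < b) :
    ∫⁻ x : E, ENNReal.ofReal (Real.exp (-b * ‖x‖ ^ 2)) =
      ENNReal.ofReal ((π / b) ^ (Module.finrank ℝ E / 2 : ℝ)) := by
  rw [← GaussianFourier.integral_rexp_neg_mul_sq_norm hb,
    ofReal_integral_eq_lintegral_ofReal (integrable_exp_neg_mul_norm_sq hb)
      (.of_forall fun _ => (Real.exp_pos _).le)]

theorem one_div_five_rpow_le_setIntegral_voronoi_mul_rhoS (L : Submodule ℤ E)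
    [DiscreteTopology L] {s : ℝ} (hs : 0 < s) :
    (1 / 5 : ℝ) ^ (Module.finrank ℝ E / 2 : ℝ) ≤
      (∫ x in s⁻¹ • voronoi L, Real.exp (-π * ‖x‖ ^ 2)) * rhoS s (L : Set E) := by
  set W := s⁻¹ • voronoi L
  have hL : IsClosed (L : Set E) := AddSubgroup.isClosed_of_discrete (H := L.toAddSubgroup)
  have : Countable L := TopologicalSpace.separableSpace_iff_countable.1 inferInstance
  have hterm (y : L) : Real.exp (-π * ‖s⁻¹ • (y : E)‖ ^ 2) =
      Real.exp (-π * ‖(y : E)‖ ^ 2 / s ^ 2) := by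
    rw [norm_smul, Real.norm_of_nonneg (inv_nonneg.2 hs.le)]
    field_simp
  have hρ : ∑' y : L, ENNReal.ofReal (Real.exp (-π * ‖s⁻¹ • (y : E)‖ ^ 2)) =
      ENNReal.ofReal (rhoS s (L : Set E)) := by
    simp only [hterm]
    refine (ENNReal.ofReal_tsum_of_nonneg (fun _ => (Real.exp_pos _).le) ?_).symm
    refine (summable_exp_neg_mul_norm_sq L (a := π / s ^ 2) (by positivity)).congr fun y => ?_
    ring_nf
  have hγ : ∫⁻ x in W, ENNReal.ofReal (Real.exp (-π * ‖x‖ ^ 2)) =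
      ENNReal.ofReal (∫ x in W, Real.exp (-π * ‖x‖ ^ 2)) :=
    (ofReal_integral_eq_lintegral_ofReal (integrable_exp_neg_mul_norm_sq Real.pi_pos).integrableOn
      (.of_forall fun _ => (Real.exp_pos _).le)).symm
  have key := lintegral_le_tsum_mul_setLIntegral (μ := volume)
    (f := fun x : E => ENNReal.ofReal (Real.exp (-(5 * π) * ‖x‖ ^ 2)))
    (g := fun y : L => ENNReal.ofReal (Real.exp (-π * ‖s⁻¹ • (y : E)‖ ^ 2)))
    (iUnion_image_add_smul_smul_voronoi_eq_univ hL (inv_ne_zero hs.ne'))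
    (by fun_prop : Measurable fun x : E => ENNReal.ofReal (Real.exp (-π * ‖x‖ ^ 2)))
    fun y x hx => by
      rw [← ENNReal.ofReal_mul (Real.exp_pos _).le]
      exact ENNReal.ofReal_le_ofReal <| exp_neg_five_mul_norm_add_sq_le Real.pi_pos.le
        (norm_le_norm_add_smul_of_mem_smul_voronoi hx y.2)
  rw [lintegral_exp_neg_mul_norm_sq (by positivity), hρ, hγ, ← ENNReal.ofReal_mul
    (rhoS_nonneg s _), ENNReal.ofReal_le_ofReal_iff (mul_nonneg (rhoS_nonneg s _)
      (integral_nonneg fun _ => (Real.exp_pos _).le))] at key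
  rw [mul_comm]
  convert key using 2
  field_simp

end Gaussian

/-- `γ_s(V(L)) · ρ_s(L) ≥ exp(-4n)/2`. -/
theorem gauss_voronoi_mul_rho_ge {n : ℕ}
    (L : Submodule ℤ (EuclideanSpace ℝ (Fin n))) (hL : IsLatticeOfRank L n)
    (s : ℝ) (hs : 0 < s) :
    Real.exp (-(4 * n)) / 2 ≤
      gauss s (voronoi L) * rhoS s (L : Set (EuclideanSpace ℝ (Fin n))) := by
  obtain ⟨b, hb, rfl⟩ := hL
  have : DiscreteTopology (Submodule.span ℤ (range b)) := by
    rw [← coe_basisOfLinearIndependentOfCardEqFinrank' (K := ℝ) b hb (by simp)]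
    infer_instance
  have key := one_div_five_rpow_le_setIntegral_voronoi_mul_rhoS (Submodule.span ℤ (range b)) hs
  rw [finrank_euclideanSpace, Fintype.card_fin] at key
  exact (exp_neg_four_mul_div_two_le_one_div_five_rpow n.cast_nonneg).trans key
end
end

section
/- For all real x > 1, exp(-2*(log x)^2) + exp(-2*(log(x/(x-1)))^2) < 1. -/
open scoped Real Pointwise
open MeasureTheory Set

noncomputable section

variable {E : Type*} [NormedAddCommGroup E] [InnerProductSpace ℝ E]

/-! With `a = 1/x` the claim reads `f a + f (1 - a) < 1` for `f a = exp (-2 log² a)`, and by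
symmetry `a ≤ 1/2`. Completing the square, `-2 log² a ≤ 1/2 + 2 log a`, so `f a ≤ √e a²`; and
`f (1 - a) ≤ 1 / (1 + 2t²)` for `t = -log (1 - a) ≥ 2a / (2 - a)`. What remains,
`√e a² ≤ 2t² / (1 + 2t²)`, is a polynomial inequality once `√e < 5/3`. -/

open Real

lemma exp_neg_le_inv_one_add {x : ℝ} (hx : -1 < x) : exp (-x) ≤ (1 + x)⁻¹ := by
  rw [exp_neg]
  exact inv_anti₀ (by linarith) (by linarith [add_one_le_exp x])

lemma exp_neg_two_mul_log_sq_le {a : ℝ} (ha : 0 < a) :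
    exp (-2 * log a ^ 2) ≤ exp (1 / 2) * a ^ 2 := by
  have hsq : -2 * log a ^ 2 ≤ 1 / 2 + 2 * log a := by nlinarith [sq_nonneg (log a + 1 / 2)]
  calc exp (-2 * log a ^ 2) ≤ exp (1 / 2 + 2 * log a) := exp_le_exp.mpr hsq
    _ = exp (1 / 2) * a ^ 2 := by rw [exp_add, two_mul, exp_add, exp_log ha, sq]

lemma exp_one_half_lt : exp (1 / 2) < 5 / 3 := by
  have h : exp (1 / 2) ^ 2 < (5 / 3) ^ 2 := by
    rw [← exp_nat_mul]
    norm_num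
    linarith [exp_one_lt_d9]
  exact lt_of_pow_lt_pow_left₀ 2 (by norm_num) h

lemma two_mul_div_two_sub_le_neg_log_one_sub {a : ℝ} (ha0 : 0 ≤ a) (ha1 : a < 1) :
    2 * a / (2 - a) ≤ -log (1 - a) := by
  have h := le_log_one_add_of_nonneg (div_nonneg ha0 (sub_pos.mpr ha1).le)
  have h1a : 1 - a ≠ 0 := by linarith
  rw [show 1 + a / (1 - a) = (1 - a)⁻¹ by field_simp; ring, log_inv] at h
  convert h using 1
  field_simp
  ring

lemma exp_log_sq_add_exp_log_one_sub_sq_lt_one_of_le_half {a : ℝ} (ha0 : 0 < a)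
    (ha : a ≤ 1 / 2) : exp (-2 * log a ^ 2) + exp (-2 * log (1 - a) ^ 2) < 1 := by
  set t := -log (1 - a) with ht
  have hτ : 2 * a / (2 - a) ≤ t := two_mul_div_two_sub_le_neg_log_one_sub ha0.le (by linarith)
  have hA : exp (-2 * log a ^ 2) < 5 / 3 * a ^ 2 :=
    (exp_neg_two_mul_log_sq_le ha0).trans_lt (by gcongr; exact exp_one_half_lt)
  have hB : exp (-2 * log (1 - a) ^ 2) ≤ (1 + 2 * t ^ 2)⁻¹ := by
    rw [show -2 * log (1 - a) ^ 2 = -(2 * t ^ 2) by rw [ht, neg_sq]; ring]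
    exact exp_neg_le_inv_one_add (by linarith [sq_nonneg t])
  have hta : 2 * a ≤ t * (2 - a) := by rwa [div_le_iff₀ (by linarith)] at hτ
  have hC : 5 / 3 * a ^ 2 ≤ 1 - (1 + 2 * t ^ 2)⁻¹ := by
    rw [show 1 - (1 + 2 * t ^ 2)⁻¹ = 2 * t ^ 2 / (1 + 2 * t ^ 2) by field_simp; ring,
      le_div_iff₀ (by positivity)]
    have hsq : 4 * a ^ 2 ≤ t ^ 2 * (2 - a) ^ 2 := by
      nlinarith [mul_self_le_mul_self (by positivity) hta]
    have hpoly : 5 * (2 - a) ^ 2 ≤ 24 - 40 * a ^ 2 := by nlinarith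
    nlinarith [mul_le_mul_of_nonneg_left hpoly (sq_nonneg t)]
  linarith

lemma exp_log_sq_add_exp_log_one_sub_sq_lt_one {a : ℝ} (ha0 : 0 < a) (ha1 : a < 1) :
    exp (-2 * log a ^ 2) + exp (-2 * log (1 - a) ^ 2) < 1 := by
  rcases le_total a (1 / 2) with ha | ha
  · exact exp_log_sq_add_exp_log_one_sub_sq_lt_one_of_le_half ha0 ha
  · have h := exp_log_sq_add_exp_log_one_sub_sq_lt_one_of_le_half (a := 1 - a)
      (by linarith) (by linarith)
    rw [sub_sub_cancel] at h
    linarith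

/-- For all `x > 1`,
`exp(-2 log² x) + exp(-2 log²(x/(x-1))) < 1`. -/
theorem exp_log_sq_add_exp_log_sq_lt_one (x : ℝ) (hx : 1 < x) :
    Real.exp (-2 * Real.log x ^ 2) +
      Real.exp (-2 * Real.log (x / (x - 1)) ^ 2) < 1 := by
  have h := exp_log_sq_add_exp_log_one_sub_sq_lt_one (a := x⁻¹) (by positivity)
    (inv_lt_one_of_one_lt₀ hx)
  rwa [log_inv, neg_sq, show 1 - x⁻¹ = (x / (x - 1))⁻¹ by field_simp, log_inv, neg_sq] at h
end
end

section
/- Let 0 < a_1 < a_2 < ... < a_k be reals and d_1, ..., d_k positive integers, and set m_j = sum over i >= j of d_i. Then sum over i of d_i * a_i <= 2e * ceil(log(2*m_1)) * max over j of m_j * (product over i >= j of a_i^{d_i})^{1/m_j}. -/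
open scoped Real Pointwise
open MeasureTheory Set

noncomputable section

variable {E : Type*} [NormedAddCommGroup E] [InnerProductSpace ℝ E]

/-!
Since `a` is increasing, `a j` is at most the weighted geometric mean `G j` of `a j, …, a k`, so
`d j * a j ≤ (d j / m j) * W` with `W = max_j m j * G j`. As `m j = d j + m (j + 1)`, the ratio
`d j / m j` is at most `log (m j) - log (m (j + 1))`, except for the last one, which is `1`; the sum
of the ratios telescopes to at most `1 + log (m 1) ≤ 2e ⌈log (2 m 1)⌉`.
-/

open Finset Real

theorem le_rpow_inv_sum_of_monotone {ι : Type*} [Preorder ι] [LocallyFiniteOrderTop ι]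
    {a : ι → ℝ} (ha : Monotone a) {j : ι} (haj : 0 ≤ a j) (d : ι → ℕ)
    (hd : 0 < ∑ i ∈ Ici j, d i) :
    a j ≤ (∏ i ∈ Ici j, a i ^ d i) ^ ((∑ i ∈ Ici j, d i : ℕ) : ℝ)⁻¹ := by
  have hprod : 0 ≤ ∏ i ∈ Ici j, a i ^ d i :=
    prod_nonneg fun i hi => pow_nonneg (haj.trans (ha (mem_Ici.1 hi))) _
  rw [le_rpow_inv_iff_of_pos haj hprod (by exact_mod_cast hd), rpow_natCast,
    ← prod_pow_eq_pow_sum]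
  exact prod_le_prod (fun _ _ => pow_nonneg haj _)
    fun i hi => pow_le_pow_left₀ haj (ha (mem_Ici.1 hi)) _

theorem sum_div_sum_Ici_le_one_add_log {k : ℕ} (d : Fin (k + 1) → ℝ) (hd : ∀ i, 0 < d i) :
    ∑ i, d i / ∑ j ∈ Ici i, d j ≤ 1 + log ((∑ j, d j) / d (Fin.last k)) := by
  induction k with
  | zero => simp [div_self (hd 0).ne']
  | succ k ih =>
    have htail := ih (fun i => d i.succ) fun i => hd i.succ
    rw [Fin.succ_last] at htail
    set S := ∑ j, d (Fin.succ j)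
    have hS : 0 < S := sum_pos (fun i _ => hd i.succ) univ_nonempty
    have hd0 := hd 0
    have hL := hd (Fin.last (k + 1))
    have hstep : d 0 / (d 0 + S) ≤ log (d 0 + S) - log S := by
      have := one_sub_inv_le_log_of_pos (div_pos (add_pos hd0 hS) hS)
      rw [inv_div, log_div (by positivity) hS.ne'] at this
      convert this using 1
      field_simp
      ring
    have hIci0 : ∑ j ∈ Ici 0, d j = d 0 + S := by
      rw [← bot_eq_zero, Finset.Ici_bot, bot_eq_zero, Fin.sum_univ_succ]
    rw [Fin.sum_univ_succ, Fin.sum_univ_succ d, hIci0]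
    simp only [Fin.sum_Ici_succ]
    rw [log_div hS.ne' hL.ne'] at htail
    rw [log_div (by positivity) hL.ne']
    linarith

theorem sum_natCast_div_sum_Ici_le_one_add_log {n : ℕ} (d : Fin (n + 1) → ℕ) (hd : ∀ i, 1 ≤ d i) :
    ∑ i, (d i : ℝ) / (∑ j ∈ Ici i, d j : ℕ) ≤ 1 + log (∑ j, d j : ℕ) := by
  have hdpos : ∀ i, (0 : ℝ) < d i := fun i => by exact_mod_cast hd i
  calc ∑ i, (d i : ℝ) / (∑ j ∈ Ici i, d j : ℕ) = ∑ i, (d i : ℝ) / ∑ j ∈ Ici i, (d j : ℝ) := by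
        simp only [Nat.cast_sum]
    _ ≤ 1 + log ((∑ j, (d j : ℝ)) / d (Fin.last n)) := sum_div_sum_Ici_le_one_add_log _ hdpos
    _ ≤ 1 + log (∑ j, d j : ℕ) := by
        rw [Nat.cast_sum]
        gcongr
        · exact div_pos (sum_pos (fun i _ => hdpos i) univ_nonempty) (hdpos _)
        · exact div_le_self (sum_nonneg fun i _ => (hdpos i).le) (by exact_mod_cast hd _)

theorem sum_mul_le_sum_div_mul {ι : Type*} (s : Finset ι) {d m a : ι → ℝ} {W : ℝ}
    (hd : ∀ i ∈ s, 0 ≤ d i) (hm : ∀ i ∈ s, 0 < m i) (hW : ∀ i ∈ s, m i * a i ≤ W) :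
    ∑ i ∈ s, d i * a i ≤ (∑ i ∈ s, d i / m i) * W := by
  rw [sum_mul]
  refine sum_le_sum fun i hi => ?_
  calc d i * a i = d i / m i * (m i * a i) := by field_simp [(hm i hi).ne']
    _ ≤ d i / m i * W := by gcongr; exacts [div_nonneg (hd i hi) (hm i hi).le, hW i hi]

theorem one_add_log_le_two_mul_exp_one_mul_ceil_log {x : ℝ} (hx : 1 ≤ x) :
    1 + log x ≤ 2 * exp 1 * ⌈log (2 * x)⌉ := by
  have hlog : 0 < log (2 * x) := log_pos (by linarith)
  have hceil : (1 : ℝ) ≤ ⌈log (2 * x)⌉ := by exact_mod_cast Int.one_le_ceil_iff.2 hlog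
  have hle : log x ≤ ⌈log (2 * x)⌉ :=
    (log_le_log (by linarith) (by linarith)).trans (Int.le_ceil _)
  have he : 1 ≤ exp 1 := one_le_exp zero_le_one
  nlinarith

/-- Reverse AM-GM. -/
theorem reverse_am_gm (k : ℕ) (hk : 0 < k) (a : Fin k → ℝ) (d : Fin k → ℕ)
    (ha : StrictMono a) (hapos : ∀ i, 0 < a i) (hd : ∀ i, 1 ≤ d i)
    (m : Fin k → ℕ) (hm : ∀ j, m j = ∑ i ∈ Finset.Ici j, d i) :
    ∑ i, (d i : ℝ) * a i ≤
      2 * Real.exp 1 * (⌈Real.log (2 * (m ⟨0, hk⟩ : ℝ))⌉ : ℝ) *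
        (⨆ j : Fin k, (m j : ℝ) *
          (∏ i ∈ Finset.Ici j, a i ^ d i) ^ ((m j : ℝ)⁻¹)) := by
  obtain ⟨n, rfl⟩ := Nat.exists_eq_add_one_of_ne_zero hk.ne'
  set W := ⨆ j : Fin (n + 1), (m j : ℝ) * (∏ i ∈ Ici j, a i ^ d i) ^ ((m j : ℝ)⁻¹)
  have hmpos : ∀ j, 0 < m j := fun j => by
    rw [hm]
    exact sum_pos (fun i _ => hd i) ⟨j, mem_Ici.2 le_rfl⟩
  have hW : ∀ j, (m j : ℝ) * a j ≤ W := fun j => by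
    refine le_trans ?_ (le_ciSup (finite_range _).bddAbove j)
    gcongr
    rw [hm]
    exact le_rpow_inv_sum_of_monotone ha.monotone (hapos j).le d (hm j ▸ hmpos j)
  have hratio : ∑ i, (d i : ℝ) / m i ≤ 2 * exp 1 * ⌈log (2 * (m 0 : ℝ))⌉ := by
    have hm0 : m 0 = ∑ j, d j := by rw [hm, ← bot_eq_zero, Finset.Ici_bot]
    calc ∑ i, (d i : ℝ) / m i = ∑ i, (d i : ℝ) / (∑ j ∈ Ici i, d j : ℕ) := by simp only [hm]
      _ ≤ 1 + log (m 0 : ℝ) := hm0 ▸ sum_natCast_div_sum_Ici_le_one_add_log d hd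
      _ ≤ _ := one_add_log_le_two_mul_exp_one_mul_ceil_log (by exact_mod_cast hmpos 0)
  calc ∑ i, (d i : ℝ) * a i ≤ (∑ i, (d i : ℝ) / m i) * W :=
        sum_mul_le_sum_div_mul _ (fun _ _ => by positivity)
          (fun j _ => by exact_mod_cast hmpos j) fun j _ => hW j
    _ ≤ 2 * exp 1 * ⌈log (2 * (m 0 : ℝ))⌉ * W :=
        mul_le_mul_of_nonneg_right hratio (le_trans (by have := hapos 0; positivity) (hW 0))
end
end
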